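/- Let p_{ij} ≥ 0 (1 ≤ i ≤ m, 1 ≤ j ≤ n) be processing times on unrelated machines, p_{[j]} = min_i p_{ij}, and let C* be the minimum over all assignments σ: jobs → machines of max_i Σ_{σ(j)=i} p_{ij}. If C* ≤ (Σ_j p_{[j]})/√m, then for any assignment with sorted loads T₁ ≥ ⋯ ≥ T_m and the optimal-makespan assignment with sorted loads L₁ ≥ ⋯ ≥ L_m, we have Σ_{k=1}^i L_k ≤ √m · Σ_{k=1}^i T_k for all i, since i·L₁ ≤ √m·(i/m)·Σ_j p_{[j]} ≤ √m·Σ_{k=1}^i T_k. -/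

import Mathlib

/-- Load of machine `i` under assignment `σ` of jobs to unrelated machines with
processing times `p i j`. -/
noncomputable def mload {m n : ℕ} (p : Fin m → Fin n → ℝ) (σ : Fin n → Fin m)
    (i : Fin m) : ℝ :=
  ∑ j, if σ j = i then p i j else 0

/-- Makespan of assignment `σ`: the largest machine load. -/
noncomputable def makespan {m n : ℕ} (p : Fin m → Fin n → ℝ) (σ : Fin n → Fin m) : ℝ :=
  sSup (Set.range (mload p σ))

/-- Sum of the `k` largest entries of a finite real vector. -/
noncomputable def topSum {m : ℕ} (X : Fin m → ℝ) (k : ℕ) : ℝ :=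
  sSup {v : ℝ | ∃ s : Finset (Fin m), s.card = k ∧ v = ∑ i ∈ s, X i}

/-!
Write `P = Σ_j p_[j]`. Every load of `σopt` is at most its makespan `C* ≤ P / √m`, so its `i`
largest loads sum to at most `i P / √m = √m · (i/m) P`. Any assignment `τ` puts each job `j` on
some machine at cost at least `p_[j]`, so its total load is at least `P`; and the `i` largest of
`m` numbers carry at least an `i/m` share of their total.
-/

open Finset

section Averaging

variable {ι M : Type*} [Fintype ι] [DecidableEq ι]
  [AddCommMonoid M] [PartialOrder M] [IsOrderedAddMonoid M]

theorem card_nsmul_sum_le_card_nsmul_sum_of_forall_le {X : ι → M} {s : Finset ι}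
    (h : ∀ i ∈ s, ∀ j ∉ s, X j ≤ X i) :
    #s • ∑ i, X i ≤ Fintype.card ι • ∑ i ∈ s, X i := by
  have hcompl : #s • ∑ j ∈ sᶜ, X j ≤ #sᶜ • ∑ i ∈ s, X i := by
    calc #s • ∑ j ∈ sᶜ, X j = ∑ _i ∈ s, ∑ j ∈ sᶜ, X j := by rw [sum_const]
      _ ≤ ∑ i ∈ s, ∑ _j ∈ sᶜ, X i :=
        sum_le_sum fun i hi => sum_le_sum fun j hj => h i hi j (mem_compl.mp hj)
      _ = #sᶜ • ∑ i ∈ s, X i := by rw [sum_comm, sum_const]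
  calc #s • ∑ i, X i = #s • ∑ i ∈ s, X i + #s • ∑ j ∈ sᶜ, X j := by
        rw [← sum_add_sum_compl s, nsmul_add]
    _ ≤ #s • ∑ i ∈ s, X i + #sᶜ • ∑ i ∈ s, X i := by gcongr
    _ = Fintype.card ι • ∑ i ∈ s, X i := by rw [← add_nsmul, card_add_card_compl]

end Averaging

theorem le_of_mem_of_notMem_of_sum_maximal {ι : Type*} [DecidableEq ι] {X : ι → ℝ}
    {s : Finset ι} (hmax : ∀ t : Finset ι, #t = #s → ∑ i ∈ t, X i ≤ ∑ i ∈ s, X i)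
    {i j : ι} (hi : i ∈ s) (hj : j ∉ s) : X j ≤ X i := by
  have hj' : j ∉ s.erase i := fun h => hj (mem_of_mem_erase h)
  have hswap := hmax (insert j (s.erase i)) (by
    rw [card_insert_of_notMem hj', card_erase_add_one hi])
  rw [sum_insert hj', sum_erase_eq_sub hi] at hswap
  linarith

section TopSum

variable {m : ℕ} (X : Fin m → ℝ)

theorem topSum_set_finite (k : ℕ) :
    {v : ℝ | ∃ s : Finset (Fin m), #s = k ∧ v = ∑ i ∈ s, X i}.Finite :=
  (Set.finite_range fun s : Finset (Fin m) => ∑ i ∈ s, X i).subset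
    (by rintro _ ⟨s, -, rfl⟩; exact ⟨s, rfl⟩)

theorem sum_le_topSum {s : Finset (Fin m)} : ∑ i ∈ s, X i ≤ topSum X #s :=
  le_csSup (topSum_set_finite X _).bddAbove ⟨s, rfl, rfl⟩

theorem exists_card_eq_sum_eq_topSum {k : ℕ} (hk : k ≤ m) :
    ∃ s : Finset (Fin m), #s = k ∧ ∑ i ∈ s, X i = topSum X k := by
  obtain ⟨s, -, hs⟩ := exists_subset_card_eq (s := (univ : Finset (Fin m))) (by simpa using hk)
  have hne : {v : ℝ | ∃ s : Finset (Fin m), #s = k ∧ v = ∑ i ∈ s, X i}.Nonempty :=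
    ⟨_, s, hs, rfl⟩
  obtain ⟨t, ht, hsum⟩ := hne.csSup_mem (topSum_set_finite X k)
  exact ⟨t, ht, hsum.symm⟩

theorem topSum_le_mul_of_forall_le {k : ℕ} (hk : k ≤ m) {c : ℝ} (h : ∀ i, X i ≤ c) :
    topSum X k ≤ k * c := by
  obtain ⟨s, hs, hsum⟩ := exists_card_eq_sum_eq_topSum X hk
  rw [← hsum, ← hs, ← nsmul_eq_mul]
  exact sum_le_card_nsmul s X c fun i _ => h i

theorem div_mul_sum_le_topSum {k : ℕ} (hk : k ≤ m) :
    (k / m : ℝ) * ∑ i, X i ≤ topSum X k := by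
  obtain ⟨s, hs, hsum⟩ := exists_card_eq_sum_eq_topSum X hk
  have hdom : ∀ i ∈ s, ∀ j ∉ s, X j ≤ X i := fun i hi j hj =>
    le_of_mem_of_notMem_of_sum_maximal
      (fun t ht => (sum_le_topSum X).trans_eq (by rw [ht, hs, hsum])) hi hj
  have havg := card_nsmul_sum_le_card_nsmul_sum_of_forall_le hdom
  rw [nsmul_eq_mul, nsmul_eq_mul, Fintype.card_fin, hs] at havg
  rw [← hsum]
  rcases eq_or_ne m 0 with rfl | hm
  · simp [Subsingleton.elim s ∅]
  · rw [div_mul_eq_mul_div, div_le_iff₀ (by positivity), mul_comm _ (m : ℝ)]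
    exact havg

end TopSum

section Loads

variable {m n : ℕ} (p : Fin m → Fin n → ℝ) (σ : Fin n → Fin m)

theorem mload_le_makespan (i : Fin m) : mload p σ i ≤ makespan p σ :=
  le_csSup (Set.finite_range _).bddAbove (Set.mem_range_self i)

theorem sum_mload : ∑ i, mload p σ i = ∑ j, p (σ j) j := by
  simp only [mload]
  rw [sum_comm]
  simp

theorem sum_sInf_le_sum_mload : ∑ j, sInf (Set.range fun i => p i j) ≤ ∑ i, mload p σ i := by
  rw [sum_mload]
  exact sum_le_sum fun j _ => csInf_le (Set.finite_range _).bddBelow (Set.mem_range_self (σ j))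

end Loads

theorem war_sqrt_case1_general (m n : ℕ) (p : Fin m → Fin n → ℝ)
    (σopt : Fin n → Fin m)
    (hcase : makespan p σopt ≤
      (∑ j, sInf (Set.range fun i => p i j)) / Real.sqrt m)
    (τ : Fin n → Fin m) :
    ∀ i : ℕ, i ≤ m →
      topSum (mload p σopt) i ≤ Real.sqrt m * topSum (mload p τ) i := by
  intro i hi
  set P := ∑ j, sInf (Set.range fun i => p i j)
  have hτ : (i / m : ℝ) * P ≤ topSum (mload p τ) i :=
    (mul_le_mul_of_nonneg_left (sum_sInf_le_sum_mload p τ) (by positivity)).trans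
      (div_mul_sum_le_topSum _ hi)
  calc topSum (mload p σopt) i ≤ i * makespan p σopt :=
        topSum_le_mul_of_forall_le _ hi (mload_le_makespan p σopt)
    _ ≤ i * (P / Real.sqrt m) := by gcongr
    _ = Real.sqrt m * ((i / m : ℝ) * P) := by
        rw [div_eq_mul_one_div P, ← Real.sqrt_div_self']
        ring
    _ ≤ Real.sqrt m * topSum (mload p τ) i := by gcongr

/-- Case 1 of `WAR ≤ √m` on unrelated machines: if the minimum makespan `C*`
satisfies `C* ≤ (Σ_j p_[j])/√m` where `p_[j] = min_i p_{ij}`, then for the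
optimal-makespan assignment `σopt` and any assignment `τ`, the sorted-load
prefix sums satisfy `Σ_{k≤i} L_k ≤ √m · Σ_{k≤i} T_k` for all `i`. -/
theorem war_sqrt_case1 (m n : ℕ) (hm : 0 < m) (p : Fin m → Fin n → ℝ)
    (hp : ∀ i j, 0 ≤ p i j)
    (σopt : Fin n → Fin m) (hopt : ∀ σ : Fin n → Fin m, makespan p σopt ≤ makespan p σ)
    (hcase : makespan p σopt ≤
      (∑ j, sInf (Set.range fun i => p i j)) / Real.sqrt m)
    (τ : Fin n → Fin m) :
    ∀ i : ℕ, i ≤ m →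
      topSum (mload p σopt) i ≤ Real.sqrt m * topSum (mload p τ) i :=
  war_sqrt_case1_general m n p σopt hcase τ
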